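/- Let R be a commutative Noetherian ring and M a finitely generated R-module with transpose Tr(M). Then M is reflexive (i.e. the canonical map M → M** is bijective) if and only if Ext^1_R(Tr(M), R) = 0 and Ext^2_R(Tr(M), R) = 0. -/

import Mathlib

/-!
Write `G = Fin m → R`, `F = Fin n → R`, and let `⋯ → P₃ → P₂ → F* → G* → Tr M → 0` be a projective
resolution extending `φ*`. Since `Hom(-, R)` is left exact, `0 → M* → F* → G*` is exact, so `d₂`
factors as `P₂ ↠ M* ↪ F*` through a surjection `ρ`, and `P₃ → P₂ → M* → 0` is exact. Dualizing,
`d₂* = ρ* ∘ π**` with `ρ*` injective and `im ρ* = ker d₃*`. Identifying `G** = G` and `F** = F`,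
the cohomology of `G → F → P₂* → P₃*` is therefore `ker (M → M**)` at `F` and `coker (M → M**)`
at `P₂*`; these compute `Ext¹(Tr M, R)` and `Ext²(Tr M, R)`.
-/

noncomputable section

set_option maxHeartbeats 1000000
set_option synthInstance.maxHeartbeats 1000000

open CategoryTheory Opposite

/-- `Ext^n_R(M, N)` as a type (vanishing is expressed by `Subsingleton`). -/
abbrev extM (R : Type) [CommRing R] (M N : Type) [AddCommGroup M] [Module R M]
    [AddCommGroup N] [Module R N] (n : ℕ) : Type :=
  ((Ext R (ModuleCat R) n).obj (op (ModuleCat.of R M))).obj (ModuleCat.of R N)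

namespace Function.Exact

open LinearMap

variable {R : Type*} [CommRing R] {M N P Q : Type*} [AddCommGroup M] [Module R M]
  [AddCommGroup N] [Module R N] [AddCommGroup P] [Module R P] [AddCommGroup Q] [Module R Q]
  {f : M →ₗ[R] N} {g : N →ₗ[R] P}

lemma exact_comp_iff_injective (hfg : Exact f g) (hg : Surjective g) {i : P →ₗ[R] Q} :
    Exact f (i ∘ₗ g) ↔ Injective i := by
  refine ⟨fun h => ?_, fun hi => hi.comp_exact_iff_exact.2 hfg⟩
  rw [← ker_eq_bot, eq_bot_iff]
  intro x hx
  obtain ⟨y, rfl⟩ := hg x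
  exact (Submodule.mem_bot R).2 ((hfg y).2 ((h y).1 hx))

lemma exact_comp_iff_surjective (hfg : Exact f g) (hf : Injective f) {p : Q →ₗ[R] M} :
    Exact (f ∘ₗ p) g ↔ Surjective p := by
  refine ⟨fun h x => ?_, fun hp => hp.comp_exact_iff_exact.2 hfg⟩
  obtain ⟨y, hy⟩ := (h (f x)).1 ((hfg (f x)).2 ⟨x, rfl⟩)
  exact ⟨y, hf hy⟩

lemma dualMap (hfg : Exact f g) (hg : Surjective g) : Exact g.dualMap f.dualMap :=
  exact_lcomp_of_exact_of_surjective R hfg hg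

end Function.Exact

section Transpose

open Function LinearMap Module

variable {R : Type*} [CommRing R] {G F M P₂ P₃ : Type*} [AddCommGroup G] [Module R G]
  [AddCommGroup F] [Module R F] [AddCommGroup M] [Module R M] [AddCommGroup P₂] [Module R P₂]
  [AddCommGroup P₃] [Module R P₃]
  {φ : G →ₗ[R] F} {π : F →ₗ[R] M} {d₂ : P₂ →ₗ[R] Dual R F} {d₃ : P₃ →ₗ[R] P₂}

lemma exists_surjective_dualMap_comp_eq (hφπ : Exact φ π) (hπ : Surjective π)
    (h₂ : Exact d₂ φ.dualMap) : ∃ ρ : P₂ →ₗ[R] Dual R M, Surjective ρ ∧ π.dualMap ∘ₗ ρ = d₂ := by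
  have hrange : range d₂ = range π.dualMap :=
    h₂.linearMap_ker_eq.symm.trans (hφπ.dualMap hπ).linearMap_ker_eq
  let e := LinearEquiv.ofInjective π.dualMap (dualMap_injective_of_surjective hπ)
  let ρ := (LinearEquiv.ofEq _ _ hrange).trans e.symm
  refine ⟨ρ.toLinearMap ∘ₗ d₂.rangeRestrict, ρ.surjective.comp d₂.surjective_rangeRestrict, ?_⟩
  ext z x
  simp [ρ, e]

theorem exact_dualMap_dualMap_iff_injective_eval [IsReflexive R G] [IsReflexive R F]
    (hφπ : Exact φ π) (hπ : Surjective π) (h₂ : Exact d₂ φ.dualMap) :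
    Exact φ.dualMap.dualMap d₂.dualMap ↔ Injective (Dual.eval R M) := by
  obtain ⟨ρ, hρ, rfl⟩ := exists_surjective_dualMap_comp_eq hφπ hπ h₂
  rw [← dualMap_comp_dualMap, (dualMap_injective_of_surjective hρ).comp_exact_iff_exact,
    Exact.iff_of_ladder_linearEquiv (e₁ := evalEquiv R G) (e₂ := evalEquiv R F)
      (e₃ := LinearEquiv.refl R _) (f₂₃ := Dual.eval R M ∘ₗ π) rfl rfl]
  exact hφπ.exact_comp_iff_injective hπ

theorem exact_dualMap_iff_surjective_eval [IsReflexive R F]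
    (hφπ : Exact φ π) (hπ : Surjective π) (h₂ : Exact d₂ φ.dualMap) (h₃ : Exact d₃ d₂) :
    Exact d₂.dualMap d₃.dualMap ↔ Surjective (Dual.eval R M) := by
  obtain ⟨ρ, hρ, rfl⟩ := exists_surjective_dualMap_comp_eq hφπ hπ h₂
  have hρd₃ : Exact ρ.dualMap d₃.dualMap :=
    (((dualMap_injective_of_surjective hπ).comp_exact_iff_exact).1 h₃).dualMap hρ
  rw [← dualMap_comp_dualMap,
    hρd₃.exact_comp_iff_surjective (dualMap_injective_of_surjective hρ),
    ← Surjective.of_comp_iff _ (bijective_dual_eval R F).2]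
  exact Surjective.of_comp_iff (Dual.eval R M) hπ

end Transpose

namespace CategoryTheory.ProjectiveResolution

open Limits

universe v u
variable {C : Type u} [Category.{v} C] [Abelian C] [EnoughProjectives C] {X P₀ P₁ : C}

def ofPresentationComplex (f : P₁ ⟶ P₀) : ChainComplex C ℕ :=
  ChainComplex.mk' P₀ P₁ f fun g => ⟨Projective.syzygies g, Projective.d g,
    (Category.assoc _ _ _).trans ((congrArg _ (kernel.condition g)).trans comp_zero)⟩

variable (f : P₁ ⟶ P₀)

lemma ofPresentationComplex_d_1_0 : (ofPresentationComplex f).d 1 0 = f :=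
  ChainComplex.mk'_d_1_0 ..

lemma ofPresentationComplex_exactAt_succ (n : ℕ) : (ofPresentationComplex f).ExactAt (n + 1) := by
  rw [HomologicalComplex.exactAt_iff' _ (n + 2) (n + 1) n (by simp) (by simp)]
  let e : (ofPresentationComplex f).X (n + 2) ≅ _ := ChainComplex.mk'XIso _ _ _ _ n
  have hd : (ofPresentationComplex f).d (n + 2) (n + 1) =
      e.hom ≫ Projective.d ((ofPresentationComplex f).d (n + 1) n) := ChainComplex.mk'_d _ _ _ _ n
  refine ShortComplex.exact_of_iso ?_ (exact_d_f ((ofPresentationComplex f).d (n + 1) n))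
  refine ShortComplex.isoMk e.symm (Iso.refl _) (Iso.refl _) ?_ ?_
  · change e.inv ≫ (ofPresentationComplex f).d (n + 2) (n + 1) = Projective.d _ ≫ 𝟙 _
    rw [hd]
    exact (Iso.inv_hom_id_assoc e _).trans (Category.comp_id _).symm
  · exact (Category.id_comp _).trans (Category.comp_id _).symm

instance [Projective P₀] [Projective P₁] (n : ℕ) : Projective ((ofPresentationComplex f).X n) := by
  obtain (_ | _ | _ | n) := n
  · assumption
  · assumption
  all_goals apply Projective.projective_over

def ofPresentation [Projective P₀] [Projective P₁] (p : P₀ ⟶ X) [Epi p] (w : f ≫ p = 0)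
    (hfp : (ShortComplex.mk f p w).Exact) : ProjectiveResolution X where
  complex := ofPresentationComplex f
  π := (ChainComplex.toSingle₀Equiv _ _).symm
    ⟨p, (congrArg (· ≫ p) (ofPresentationComplex_d_1_0 f)).trans w⟩
  quasiIso := ⟨fun n => by
    cases n
    · rw [ChainComplex.quasiIsoAt₀_iff, ShortComplex.quasiIso_iff_of_zeros']
      · refine (ShortComplex.exact_and_epi_g_iff_of_iso ?_).2 ⟨hfp, ‹Epi p›⟩
        exact ShortComplex.isoMk (Iso.refl _) (Iso.refl _) (Iso.refl _)
          ((Category.id_comp _).trans ((ofPresentationComplex_d_1_0 f).symm.trans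
            (Category.comp_id _).symm))
          ((Category.id_comp _).trans ((ChainComplex.toSingle₀Equiv_symm_apply_f_zero
            (C := ofPresentationComplex f) p _).symm.trans (Category.comp_id _).symm))
      all_goals rfl
    · rw [quasiIsoAt_iff_exactAt']
      · apply ofPresentationComplex_exactAt_succ
      · apply ChainComplex.exactAt_succ_single_obj⟩

end CategoryTheory.ProjectiveResolution

section ModuleCat

universe u
variable {R : Type u} [CommRing R]

lemma CategoryTheory.ProjectiveResolution.subsingleton_ext_iff_exactAt {X : ModuleCat.{u} R}
    (P : ProjectiveResolution X) (Y : ModuleCat.{u} R) (n : ℕ) :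
    Subsingleton (((Ext R (ModuleCat.{u} R) n).obj (op X)).obj Y) ↔
      (P.complex.linearYonedaObj R Y).ExactAt n := by
  rw [HomologicalComplex.exactAt_iff_isZero_homology, ← ModuleCat.isZero_iff_subsingleton]
  exact (P.isoExt n Y).isZero_iff

lemma ChainComplex.exactAt_succ_iff_exact (K : ChainComplex (ModuleCat.{u} R) ℕ) (n : ℕ) :
    K.ExactAt (n + 1) ↔ Function.Exact (K.d (n + 2) (n + 1)).hom (K.d (n + 1) n).hom :=
  (K.exactAt_iff' (n + 2) (n + 1) n (by simp) (by simp)).trans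
    (ShortComplex.ShortExact.moduleCat_exact_iff_function_exact _)

lemma ChainComplex.linearYonedaObj_exactAt_succ_iff (K : ChainComplex (ModuleCat.{u} R) ℕ)
    (n : ℕ) : (K.linearYonedaObj R (ModuleCat.of R R)).ExactAt (n + 1) ↔
      Function.Exact (K.d (n + 1) n).hom.dualMap (K.d (n + 2) (n + 1)).hom.dualMap := by
  rw [HomologicalComplex.exactAt_iff' _ n (n + 1) (n + 2) (by simp) (by simp),
    ShortComplex.ShortExact.moduleCat_exact_iff_function_exact]
  let e (i : ℕ) := (ModuleCat.homLinearEquiv (M := K.X i) (N := ModuleCat.of R R) (S := R)).symm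
  exact Function.Exact.iff_of_ladder_linearEquiv (e₁ := e n) (e₂ := e (n + 1)) (e₃ := e (n + 2))
    rfl rfl

variable {M N : Type u} [AddCommGroup M] [Module R M] [AddCommGroup N] [Module R N]
  [Module.Projective R M] [Module.Projective R N]

def ModuleCat.quotientRangeProjectiveResolution (f : M →ₗ[R] N) :
    ProjectiveResolution (of R (N ⧸ LinearMap.range f)) :=
  haveI := (IsProjective.iff_projective M).1 ‹_›
  haveI := (IsProjective.iff_projective N).1 ‹_›
  haveI : Epi (ofHom (LinearMap.range f).mkQ) :=
    (epi_iff_surjective _).2 (Submodule.mkQ_surjective _)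
  ProjectiveResolution.ofPresentation (ofHom f) (ofHom (LinearMap.range f).mkQ)
    (hom_ext (LinearMap.exact_map_mkQ_range f).linearMap_comp_eq_zero)
    ((ShortComplex.ShortExact.moduleCat_exact_iff_function_exact _).2
      (LinearMap.exact_map_mkQ_range f))

lemma ModuleCat.quotientRangeProjectiveResolution_complex_d_1_0 (f : M →ₗ[R] N) :
    (quotientRangeProjectiveResolution f).complex.d 1 0 = ofHom f :=
  ProjectiveResolution.ofPresentationComplex_d_1_0 _

end ModuleCat

theorem stmt2_general (R : Type) [CommRing R]
    (M : Type) [AddCommGroup M] [Module R M]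
    (m n : ℕ) (φ : (Fin m → R) →ₗ[R] (Fin n → R))
    (π : (Fin n → R) →ₗ[R] M) (hπ : Function.Surjective π)
    (hker : LinearMap.ker π = LinearMap.range φ) :
    Function.Bijective (Module.Dual.eval R M) ↔
      (Subsingleton (extM R (Module.Dual R (Fin m → R) ⧸ LinearMap.range φ.dualMap) R 1) ∧
       Subsingleton (extM R (Module.Dual R (Fin m → R) ⧸ LinearMap.range φ.dualMap) R 2)) := by
  have hφπ : Function.Exact φ π := LinearMap.exact_iff.2 hker
  let P := ModuleCat.quotientRangeProjectiveResolution φ.dualMap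
  have hd₁ : (P.complex.d 1 0).hom = φ.dualMap :=
    congrArg ModuleCat.Hom.hom (ModuleCat.quotientRangeProjectiveResolution_complex_d_1_0 _)
  have h₂ : Function.Exact (P.complex.d 2 1).hom φ.dualMap := by
    have := (ChainComplex.exactAt_succ_iff_exact _ 0).1 (P.complex_exactAt_succ 0)
    rwa [hd₁] at this
  have h₃ : Function.Exact (P.complex.d 3 2).hom (P.complex.d 2 1).hom :=
    (ChainComplex.exactAt_succ_iff_exact _ 1).1 (P.complex_exactAt_succ 1)
  rw [Function.Bijective, P.subsingleton_ext_iff_exactAt, P.subsingleton_ext_iff_exactAt,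
    ChainComplex.linearYonedaObj_exactAt_succ_iff _ 0,
    ChainComplex.linearYonedaObj_exactAt_succ_iff _ 1, hd₁]
  exact and_congr (exact_dualMap_dualMap_iff_injective_eval hφπ hπ h₂).symm
    (exact_dualMap_iff_surjective_eval hφπ hπ h₂ h₃).symm

/-- Over a commutative Noetherian ring, a finitely generated module `M` with finite free
presentation `G →φ F → M → 0` is reflexive if and only if
`Ext^1_R(Tr M, R) = 0` and `Ext^2_R(Tr M, R) = 0`, where `Tr M = Coker φ*`. -/
theorem stmt2 (R : Type) [CommRing R] [IsNoetherianRing R]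
    (M : Type) [AddCommGroup M] [Module R M] [Module.Finite R M]
    (m n : ℕ) (φ : (Fin m → R) →ₗ[R] (Fin n → R))
    (π : (Fin n → R) →ₗ[R] M) (hπ : Function.Surjective π)
    (hker : LinearMap.ker π = LinearMap.range φ) :
    Function.Bijective (Module.Dual.eval R M) ↔
      (Subsingleton (extM R (Module.Dual R (Fin m → R) ⧸ LinearMap.range φ.dualMap) R 1) ∧
       Subsingleton (extM R (Module.Dual R (Fin m → R) ⧸ LinearMap.range φ.dualMap) R 2)) :=
  stmt2_general R M m n φ π hπ hker
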